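/- Let H ∈ (1/2, 1) and K(t,s) = c_H · s^{1/2-H} · ∫_s^t (u-s)^{H-3/2} u^{H-1/2} du for 0 < s < t, where c_H > 0 is a constant. Then for all 0 < s < t and α ∈ (0, t-s), one has K(t, s+α) ≤ K(t-α, s). -/
import Mathlib


open MeasureTheory Set

private lemma integrable_aux (s b p q : ℝ) (hp : -1 < p) (hq : 0 ≤ q) (α : ℝ) :
    IntervalIntegrable (fun v => (v - s) ^ p * (v + α) ^ q) volume s b := by
  have h1 : IntervalIntegrable (fun v : ℝ => (v - s) ^ p) volume s b := by
    have := (intervalIntegral.intervalIntegrable_rpow' (a := 0) (b := b - s) hp).comp_sub_right s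
    simpa using this
  exact h1.mul_continuousOn
    (((continuous_id.add continuous_const).continuousOn).rpow_const fun x _ => Or.inr hq)

/-- For the Volterra kernel `K(t,s) = c_H s^{1/2-H} ∫_s^t (u-s)^{H-3/2} u^{H-1/2} du`
with `H ∈ (1/2,1)`, for all `0 < s < t` and `α ∈ (0, t-s)` one has `K(t,s+α) ≤ K(t-α,s)`. -/
theorem volterra_kernel_shift_upper (H cH : ℝ) (hH : H ∈ Set.Ioo (1/2 : ℝ) 1) (hc : 0 < cH)
    (K : ℝ → ℝ → ℝ)
    (hK : ∀ t s : ℝ, 0 < s → s < t →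
      K t s = cH * s ^ (1/2 - H) * ∫ u in s..t, (u - s) ^ (H - 3/2) * u ^ (H - 1/2)) :
    ∀ t s α : ℝ, 0 < s → s < t → α ∈ Set.Ioo 0 (t - s) →
      K t (s + α) ≤ K (t - α) s := by
  intro t s α hs hst hα
  obtain ⟨hα0, hαts⟩ := hα
  have hsα : 0 < s + α := by linarith
  have hsαt : s + α < t := by linarith
  have hstα : s < t - α := by linarith
  rw [hK t (s + α) hsα hsαt, hK (t - α) s hs hstα]
  have hp : -1 < H - 3/2 := by linarith [hH.1]
  have hq : (0:ℝ) ≤ H - 1/2 := by linarith [hH.1]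
  -- change of variables
  have hchg : (∫ u in (s+α)..t, (u - (s+α)) ^ (H - 3/2) * u ^ (H - 1/2))
      = ∫ v in s..(t-α), (v - s) ^ (H - 3/2) * (v + α) ^ (H - 1/2) := by
    have := intervalIntegral.integral_comp_sub_right (a := s + α) (b := t)
      (fun v => (v - s) ^ (H - 3/2) * (v + α) ^ (H - 1/2)) α
    simp only [add_sub_cancel_right, sub_add_cancel] at this
    rw [← this]
    congr 1
    ext u
    congr 2
    ring
  rw [hchg]
  have hint1 : IntervalIntegrable
      (fun v => cH * (s+α) ^ (1/2 - H) * ((v - s) ^ (H - 3/2) * (v + α) ^ (H - 1/2)))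
      volume s (t - α) :=
    (integrable_aux s (t - α) _ _ hp hq α).const_mul _
  have hint2 : IntervalIntegrable
      (fun v => cH * s ^ (1/2 - H) * ((v - s) ^ (H - 3/2) * (v + 0) ^ (H - 1/2)))
      volume s (t - α) :=
    (integrable_aux s (t - α) _ _ hp hq 0).const_mul _
  have hmono : (∫ v in s..(t-α),
        cH * (s+α) ^ (1/2 - H) * ((v - s) ^ (H - 3/2) * (v + α) ^ (H - 1/2)))
      ≤ ∫ v in s..(t-α),
        cH * s ^ (1/2 - H) * ((v - s) ^ (H - 3/2) * (v + 0) ^ (H - 1/2)) := by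
    apply intervalIntegral.integral_mono_on (by linarith) hint1 hint2
    intro x hx
    obtain ⟨hxs, hxt⟩ := hx
    have hx0 : 0 < x := lt_of_lt_of_le hs hxs
    have key : (s+α) ^ (1/2 - H) * (x + α) ^ (H - 1/2) ≤ s ^ (1/2 - H) * x ^ (H - 1/2) := by
      have e1 : (s+α) ^ (1/2 - H) = ((s+α) ^ (H - 1/2))⁻¹ := by
        rw [show (1/2 - H : ℝ) = -(H - 1/2) by ring, Real.rpow_neg hsα.le]
      have e2 : s ^ (1/2 - H) = (s ^ (H - 1/2))⁻¹ := by
        rw [show (1/2 - H : ℝ) = -(H - 1/2) by ring, Real.rpow_neg hs.le]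
      rw [e1, e2, mul_comm _ ((x + α) ^ (H - 1/2)), mul_comm _ (x ^ (H - 1/2)),
        ← div_eq_mul_inv, ← div_eq_mul_inv,
        div_le_div_iff₀ (Real.rpow_pos_of_pos hsα _) (Real.rpow_pos_of_pos hs _)]
      rw [← Real.mul_rpow (by linarith) hs.le, ← Real.mul_rpow hx0.le (by linarith)]
      apply Real.rpow_le_rpow (by nlinarith) (by nlinarith) hq
    have hnn : 0 ≤ cH * (x - s) ^ (H - 3/2) :=
      mul_nonneg hc.le (Real.rpow_nonneg (by linarith) _)
    calc cH * (s+α) ^ (1/2 - H) * ((x - s) ^ (H - 3/2) * (x + α) ^ (H - 1/2))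
        = cH * (x - s) ^ (H - 3/2) * ((s+α) ^ (1/2 - H) * (x + α) ^ (H - 1/2)) := by ring
      _ ≤ cH * (x - s) ^ (H - 3/2) * (s ^ (1/2 - H) * x ^ (H - 1/2)) :=
          mul_le_mul_of_nonneg_left key hnn
      _ = cH * s ^ (1/2 - H) * ((x - s) ^ (H - 3/2) * (x + 0) ^ (H - 1/2)) := by ring_nf
  calc cH * (s+α) ^ (1/2 - H) * ∫ v in s..(t-α), (v - s) ^ (H - 3/2) * (v + α) ^ (H - 1/2)
      = ∫ v in s..(t-α),
          cH * (s+α) ^ (1/2 - H) * ((v - s) ^ (H - 3/2) * (v + α) ^ (H - 1/2)) := by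
        rw [intervalIntegral.integral_const_mul]
    _ ≤ ∫ v in s..(t-α),
          cH * s ^ (1/2 - H) * ((v - s) ^ (H - 3/2) * (v + 0) ^ (H - 1/2)) := hmono
    _ = cH * s ^ (1/2 - H) * ∫ v in s..(t-α), (v - s) ^ (H - 3/2) * v ^ (H - 1/2) := by
        simp [intervalIntegral.integral_const_mul]
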